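/- arXiv:1107.2220 — 2 statements merged into one kernel-verified Lean document; each statement's English description precedes it below -/
import Mathlib

section
/- Let V be a finite-dimensional real normed vector space and let C ⊆ V be a nonempty open cone, i.e. a nonempty open subset such that t·v ∈ C whenever v ∈ C and t ≥ 1. Let p : V → ℂ be a polynomial function, and suppose there are a constant c > 0 and a natural number k such that |p(T)| ≤ c·(1 + ‖T‖)^k for all T ∈ C. Then the total degree of p is at most k. -/
/-!
For `v` in the cone, `t ↦ p (t • v)` is a one-variable polynomial whose coefficient of `t ^ j` is
the degree-`j` homogeneous component `q_j` of `q` evaluated at (the coordinates of) `v`. The bound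
along the ray `t ≥ 1` caps its degree at `k`, so every `q_j` with `j > k` vanishes on the open set
`C`, hence identically.
-/

open Filter Asymptotics Bornology

theorem Polynomial.natDegree_le_of_isBigO_pow {α 𝕜 : Type*} [NormedField 𝕜] {l : Filter α}
    [l.NeBot] {z : α → 𝕜} (hz : Tendsto z l (cobounded 𝕜)) {P : Polynomial 𝕜} {k : ℕ}
    (h : (fun a => P.eval (z a)) =O[l] fun a => z a ^ k) : P.natDegree ≤ k := by
  by_contra! hk
  have hP : P.leadingCoeff ≠ 0 := leadingCoeff_ne_zero.2 (ne_zero_of_natDegree_gt hk)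
  have hequiv : (fun a => P.eval (z a)) ~[l] fun a => P.leadingCoeff * z a ^ P.natDegree :=
    isEquivalent_cobounded_leading_monomial.comp_tendsto (f := P.eval) hz
  have hlead : (fun a => P.leadingCoeff * z a ^ P.natDegree) =o[l] fun a => z a ^ P.natDegree :=
    hequiv.symm.trans_isBigO h
      |>.trans_isLittleO ((isLittleO_pow_pow_cobounded_of_lt hk).comp_tendsto hz)
  refine isLittleO_irrefl ?_ ((isLittleO_const_mul_left_iff hP).1 hlead)
  exact (hz.eventually (eventually_ne_cobounded 0)).mono (fun a ha => pow_ne_zero _ ha)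
    |>.frequently

namespace MvPolynomial

variable {σ R : Type*} [CommSemiring R]

theorem IsHomogeneous.eval_smul {φ : MvPolynomial σ R} {n : ℕ} (hφ : φ.IsHomogeneous n)
    (s : R) (x : σ → R) : eval (s • x) φ = s ^ n * eval x φ := by
  rw [eval_eq, eval_eq, Finset.mul_sum]
  refine Finset.sum_congr rfl fun d hd => ?_
  simp_rw [Pi.smul_apply, smul_eq_mul, mul_pow, Finset.prod_mul_distrib,
    Finset.prod_pow_eq_pow_sum, ← hφ.degree_eq_sum_deg_support hd]
  ring

noncomputable def restrictLine (q : MvPolynomial σ R) (x : σ → R) : Polynomial R :=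
  ∑ j ∈ Finset.range (q.totalDegree + 1),
    Polynomial.monomial j (eval x (homogeneousComponent j q))

theorem coeff_restrictLine (q : MvPolynomial σ R) (x : σ → R) (j : ℕ) :
    (q.restrictLine x).coeff j = eval x (homogeneousComponent j q) := by
  simp only [restrictLine, Polynomial.finsetSum_coeff, Polynomial.coeff_monomial,
    Finset.sum_ite_eq', Finset.mem_range]
  split_ifs with hj
  · rfl
  · rw [homogeneousComponent_eq_zero _ _ (by omega), map_zero]

theorem eval_restrictLine (q : MvPolynomial σ R) (x : σ → R) (s : R) :
    (q.restrictLine x).eval s = eval (s • x) q := by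
  conv_rhs => rw [← sum_homogeneousComponent q]
  simp only [restrictLine, Polynomial.eval_finsetSum, Polynomial.eval_monomial, map_sum,
    (homogeneousComponent_isHomogeneous _ q).eval_smul, mul_comm]

theorem totalDegree_le_of_homogeneousComponent_eq_zero {q : MvPolynomial σ R} {k : ℕ}
    (h : ∀ j, k < j → homogeneousComponent j q = 0) : q.totalDegree ≤ k := by
  refine Finset.sup_le fun d hd => not_lt.1 fun hk => mem_support_iff.1 hd ?_
  have := congrArg (coeff d) (h _ hk)
  rwa [coeff_homogeneousComponent, if_pos (by rfl), coeff_zero] at this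

theorem eval_homogeneousComponent_eq_zero_of_isBigO {α 𝕜 : Type*} [NormedField 𝕜]
    {l : Filter α} [l.NeBot] {z : α → 𝕜} (hz : Tendsto z l (cobounded 𝕜))
    {q : MvPolynomial σ 𝕜} {x : σ → 𝕜} {k j : ℕ} (hj : k < j)
    (h : (fun a => eval (z a • x) q) =O[l] fun a => z a ^ k) :
    eval x (homogeneousComponent j q) = 0 := by
  rw [← coeff_restrictLine]
  refine Polynomial.coeff_eq_zero_of_natDegree_lt (lt_of_le_of_lt ?_ hj)
  exact Polynomial.natDegree_le_of_isBigO_pow hz (by simpa only [eval_restrictLine] using h)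

theorem eq_zero_of_eval_ofReal_eq_zero_on_isOpen {ι : Type*} [Fintype ι]
    {P : MvPolynomial ι ℂ} {U : Set (ι → ℝ)} (hU : IsOpen U) (hne : U.Nonempty)
    (h : ∀ y ∈ U, eval (fun i => (y i : ℂ)) P = 0) : P = 0 := by
  obtain ⟨y₀, hy₀⟩ := hne
  obtain ⟨ε, hε, hball⟩ := Metric.isOpen_iff.1 hU y₀ hy₀
  refine funext_set (fun i => ((↑) : ℝ → ℂ) '' Metric.ball (y₀ i) ε) (fun i => ?_)
    fun x hx => ?_
  · rw [Real.ball_eq_Ioo]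
    exact (Set.Ioo_infinite (by linarith)).image Complex.ofReal_injective.injOn
  · choose y hy_mem hy using fun i => hx i trivial
    have hyU : y ∈ U := hball (by rw [ball_pi _ hε]; exact fun i _ => hy_mem i)
    rw [map_zero, ← h y hyU]
    exact congrArg (eval · P) (_root_.funext hy).symm

end MvPolynomial

/-- If a polynomial function on a finite-dimensional real normed space, given in linear
coordinates by the multivariate polynomial `q`, satisfies the bound
`‖p T‖ ≤ c * (1 + ‖T‖) ^ k` on a nonempty open cone, then its total degree is at most `k`. -/
theorem totalDegree_le_of_polynomial_bound_on_cone
    (V : Type*) [NormedAddCommGroup V] [NormedSpace ℝ V] [FiniteDimensional ℝ V]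
    (C : Set V) (hCne : C.Nonempty) (hCopen : IsOpen C)
    (hCcone : ∀ v ∈ C, ∀ t : ℝ, 1 ≤ t → t • v ∈ C)
    (n : ℕ) (e : V ≃ₗ[ℝ] (Fin n → ℝ)) (q : MvPolynomial (Fin n) ℂ)
    (p : V → ℂ) (hpq : ∀ v : V, p v = MvPolynomial.eval (fun i => ((e v i : ℝ) : ℂ)) q)
    (c : ℝ) (hc : 0 < c) (k : ℕ)
    (hbound : ∀ T ∈ C, ‖p T‖ ≤ c * (1 + ‖T‖) ^ k) :
    q.totalDegree ≤ k := by
  refine MvPolynomial.totalDegree_le_of_homogeneousComponent_eq_zero fun j hj => ?_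
  refine MvPolynomial.eq_zero_of_eval_ofReal_eq_zero_on_isOpen
    (hCopen.preimage (LinearMap.continuous_of_finiteDimensional e.symm.toLinearMap))
    (hCne.preimage e.symm.surjective) fun y hy => ?_
  set v := e.symm y
  refine MvPolynomial.eval_homogeneousComponent_eq_zero_of_isBigO
    (RCLike.tendsto_ofReal_atTop_cobounded (𝕜 := ℂ)) hj (.of_bound (c * (1 + ‖v‖) ^ k) ?_)
  filter_upwards [eventually_ge_atTop 1] with t ht
  have hp : p (t • v) = MvPolynomial.eval ((t : ℂ) • fun i => (y i : ℂ)) q := by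
    rw [hpq, map_smul, LinearEquiv.apply_symm_apply]
    exact congrArg (MvPolynomial.eval · q) (funext fun i => by simp)
  calc ‖MvPolynomial.eval ((t : ℂ) • fun i => (y i : ℂ)) q‖ = ‖p (t • v)‖ := by rw [hp]
    _ ≤ c * (1 + ‖t • v‖) ^ k := hbound _ (hCcone v hy t ht)
    _ ≤ c * ((1 + ‖v‖) * t) ^ k := by
      gcongr
      rw [norm_smul, Real.norm_of_nonneg (by linarith)]
      nlinarith [norm_nonneg v]
    _ = c * (1 + ‖v‖) ^ k * ‖(t : ℂ) ^ k‖ := by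
      rw [norm_pow, Complex.norm_real, Real.norm_of_nonneg (by linarith), mul_pow]
      ring
end

section
/- Let V be a finite-dimensional real inner product space, let a₁, …, a_n be a basis of V such that ⟨a_i, a_j⟩ ≤ 0 for all i ≠ j, let w₁, …, w_n be the dual basis characterized by ⟨w_i, a_j⟩ = δ_{ij}, and let ρ ∈ V. Then the set { λ ∈ V : ⟨λ, a_i⟩ > 0 for all i, and ⟨λ − ρ, w_i⟩ ≤ 0 for all i } is bounded. -/
open RealInnerProductSpace

/-!
Expanding `λ` in the dual basis, `λ = ∑ ⟪λ, aᵢ⟫ wᵢ`, gives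
`‖λ‖² = ∑ ⟪λ, aᵢ⟫ ⟪wᵢ, λ⟫ ≤ ∑ ⟪λ, aᵢ⟫ ⟪wᵢ, ρ⟫ = ⟪λ, ρ⟫ ≤ ‖λ‖ ‖ρ‖`,
since every coefficient `⟪λ, aᵢ⟫` is positive and `⟪wᵢ, λ⟫ ≤ ⟪wᵢ, ρ⟫`.
Hence the region lies in the closed ball of radius `‖ρ‖`.
-/

theorem norm_le_of_norm_sq_le_inner {V : Type*} [NormedAddCommGroup V] [InnerProductSpace ℝ V]
    {x y : V} (h : ‖x‖ ^ 2 ≤ ⟪x, y⟫) : ‖x‖ ≤ ‖y‖ := by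
  have hxy : ⟪x, y⟫ ≤ ‖x‖ * ‖y‖ := real_inner_le_norm x y
  nlinarith [norm_nonneg x, norm_nonneg y]

section DualBasis

variable {V ι : Type*} [NormedAddCommGroup V] [InnerProductSpace ℝ V] [Fintype ι] [DecidableEq ι]
  {a : Module.Basis ι ℝ V} {w : ι → V}

theorem Module.Basis.eq_sum_inner_smul_of_dual
    (hw : ∀ i j, ⟪w i, a j⟫ = if i = j then (1 : ℝ) else 0) (x : V) :
    x = ∑ i, ⟪x, a i⟫ • w i := by
  refine InnerProductSpace.ext_inner_right_basis a fun j => ?_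
  simp [sum_inner, real_inner_smul_left, hw]

theorem Module.Basis.inner_eq_sum_of_dual
    (hw : ∀ i j, ⟪w i, a j⟫ = if i = j then (1 : ℝ) else 0) (x y : V) :
    ⟪x, y⟫ = ∑ i, ⟪x, a i⟫ * ⟪w i, y⟫ := by
  conv_lhs => rw [a.eq_sum_inner_smul_of_dual hw x]
  simp only [sum_inner, real_inner_smul_left]

theorem Module.Basis.norm_sq_le_inner_of_dual
    (hw : ∀ i j, ⟪w i, a j⟫ = if i = j then (1 : ℝ) else 0) {x ρ : V}
    (hpos : ∀ i, 0 ≤ ⟪x, a i⟫) (hle : ∀ i, ⟪x - ρ, w i⟫ ≤ 0) :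
    ‖x‖ ^ 2 ≤ ⟪x, ρ⟫ := by
  have hcoord (i : ι) : ⟪w i, x⟫ ≤ ⟪w i, ρ⟫ := by
    rw [real_inner_comm, real_inner_comm ρ]
    linarith [inner_sub_left (𝕜 := ℝ) x ρ (w i), hle i]
  calc ‖x‖ ^ 2 = ⟪x, x⟫ := (real_inner_self_eq_norm_sq x).symm
    _ = ∑ i, ⟪x, a i⟫ * ⟪w i, x⟫ := a.inner_eq_sum_of_dual hw x x
    _ ≤ ∑ i, ⟪x, a i⟫ * ⟪w i, ρ⟫ :=
        Finset.sum_le_sum fun i _ => mul_le_mul_of_nonneg_left (hcoord i) (hpos i)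
    _ = ⟪x, ρ⟫ := (a.inner_eq_sum_of_dual hw x ρ).symm

end DualBasis

theorem langlands_region_bounded_general
    (V : Type*) [NormedAddCommGroup V] [InnerProductSpace ℝ V]
    (n : ℕ) (a : Module.Basis (Fin n) ℝ V)
    (w : Fin n → V)
    (hw : ∀ i j : Fin n, ⟪w i, a j⟫ = if i = j then (1 : ℝ) else 0)
    (ρ : V) :
    Bornology.IsBounded
      {lam : V | (∀ i : Fin n, 0 < ⟪lam, a i⟫) ∧ (∀ i : Fin n, ⟪lam - ρ, w i⟫ ≤ 0)} := by
  refine (Metric.isBounded_closedBall (x := (0 : V)) (r := ‖ρ‖)).subset ?_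
  rintro lam ⟨hpos, hle⟩
  rw [mem_closedBall_zero_iff]
  exact norm_le_of_norm_sq_le_inner
    (a.norm_sq_le_inner_of_dual hw (fun i => (hpos i).le) hle)

/-- Let `a₁, …, aₙ` be a basis of a finite-dimensional real inner product space with
`⟪aᵢ, aⱼ⟫ ≤ 0` for `i ≠ j`, let `w₁, …, wₙ` be the dual basis (`⟪wᵢ, aⱼ⟫ = δᵢⱼ`), and let
`ρ ∈ V`. Then the set of `λ` with `⟪λ, aᵢ⟫ > 0` and `⟪λ − ρ, wᵢ⟫ ≤ 0` for all `i` is bounded. -/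
theorem langlands_region_bounded
    (V : Type*) [NormedAddCommGroup V] [InnerProductSpace ℝ V] [FiniteDimensional ℝ V]
    (n : ℕ) (a : Module.Basis (Fin n) ℝ V)
    (ha : ∀ i j : Fin n, i ≠ j → ⟪a i, a j⟫ ≤ 0)
    (w : Fin n → V)
    (hw : ∀ i j : Fin n, ⟪w i, a j⟫ = if i = j then (1 : ℝ) else 0)
    (ρ : V) :
    Bornology.IsBounded
      {lam : V | (∀ i : Fin n, 0 < ⟪lam, a i⟫) ∧ (∀ i : Fin n, ⟪lam - ρ, w i⟫ ≤ 0)} :=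
  langlands_region_bounded_general V n a w hw ρ
end
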